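/- Let f : {s+1,…,e} → R be piecewise constant with at least two change points η_r < η_{r+1} in (s,e], where η_r is the first change point in (s,e). If η_r − s ≤ c₁²Δ, where Δ ≤ η_{r+1} − η_r, then |f̃_{η_r}^{s,e}| ≤ c₁·|f̃_{η_{r+1}}^{s,e}| + 2·κ_r·√(η_r − s), where κ_r is the jump size at η_r and f̃ is the univariate CUSUM statistic. -/

import Mathlib

/-!
Write `f = g + h` with `h = κ · 𝟙{i ≤ η_r}`, `κ = f η_r - f η_{r+1}`, so that `g` is constant on
`(s, η_{r+1}]`. For a sequence constant on `(s, t]` the CUSUM statistic at `r ≤ t` is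
`ρ = √((r - s)(e - t) / ((t - s)(e - r)))` times the one at `t`, and `ρ ≤ c₁` as soon as
`r - s ≤ c₁² (t - s)`. Hence `f̃_r - ρ f̃_t = h̃_r - ρ h̃_t`, and the explicit CUSUM of the step `h`
satisfies `|h̃_r| ≤ |κ| √(r - s)` and `ρ |h̃_t| ≤ |κ| √(r - s)`.
-/

open Finset

/-- The univariate CUSUM statistic of a sequence `f` over `(s, e]` at time `t`. -/
noncomputable def cusum1d (f : ℕ → ℝ) (s e t : ℕ) : ℝ :=
  Real.sqrt (((e : ℝ) - t) / (((e : ℝ) - s) * ((t : ℝ) - s))) * ∑ i ∈ Ioc s t, f i -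
    Real.sqrt (((t : ℝ) - s) / (((e : ℝ) - s) * ((e : ℝ) - t))) * ∑ i ∈ Ioc t e, f i

open Real

lemma sqrt_div_mul_mul_self (a b : ℝ) {c : ℝ} (hc : 0 ≤ c) :
    √(a / (b * c)) * c = √(a * c / b) := by
  rw [← sqrt_sq hc, ← sqrt_mul' _ (sq_nonneg _), sqrt_sq hc]
  rcases hc.eq_or_lt with rfl | hc
  · simp
  · congr 1
    field_simp

noncomputable def cusumScale (s e r t : ℝ) : ℝ :=
  √((r - s) * (e - t) / ((t - s) * (e - r)))

section Weights

variable {s e r t : ℝ}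

lemma cusumScale_le {c : ℝ} (hsr : s < r) (hrt : r ≤ t) (hte : t ≤ e) (hc : 0 ≤ c)
    (h : r - s ≤ c ^ 2 * (t - s)) : cusumScale s e r t ≤ c := by
  rw [cusumScale, sqrt_le_left hc]
  rcases hte.eq_or_lt with rfl | hte
  · simpa using sq_nonneg c
  rw [div_le_iff₀ (mul_pos (by linarith) (by linarith))]
  nlinarith [mul_le_mul h (show e - t ≤ e - r by linarith) (by linarith) (by nlinarith)]

lemma mul_sqrt_div_le_sqrt (hsr : s < r) (hrt : r ≤ t) (hte : t ≤ e) :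
    (r - s) * √((e - t) / ((e - s) * (t - s))) ≤ √(r - s) := by
  have hrs : 0 < r - s := by linarith
  have hdenom : 0 < (e - s) * (t - s) := mul_pos (by linarith) (by linarith)
  rw [le_sqrt (mul_nonneg hrs.le (sqrt_nonneg _)) hrs.le, mul_pow,
    sq_sqrt (div_nonneg (by linarith) hdenom.le), mul_div_assoc', div_le_iff₀ hdenom]
  nlinarith [mul_le_mul (show e - t ≤ e - s by linarith) (show r - s ≤ t - s by linarith)
    hrs.le (by linarith)]

lemma cusumScale_mul_le_sqrt (hsr : s < r) (hrt : r ≤ t) (hte : t ≤ e) :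
    cusumScale s e r t * ((r - s) * √((e - t) / ((e - s) * (t - s)))) ≤ √(r - s) := by
  rcases hte.eq_or_lt with rfl | hte
  · simp [cusumScale]
  have hrs : 0 < r - s := by linarith
  have hts : 0 < t - s := by linarith
  have her : 0 < e - r := by linarith
  have hes : 0 < e - s := by linarith
  have het : 0 < e - t := by linarith
  rw [cusumScale, le_sqrt (by positivity) hrs.le, mul_pow, mul_pow, sq_sqrt (by positivity),
    sq_sqrt (by positivity),
    show (r - s) * (e - t) / ((t - s) * (e - r)) * ((r - s) ^ 2 * ((e - t) / ((e - s) * (t - s))))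
      = (r - s) ^ 3 * (e - t) ^ 2 / ((t - s) ^ 2 * ((e - r) * (e - s))) by field_simp,
    div_le_iff₀ (by positivity)]
  have hnum : (r - s) ^ 2 * (e - t) ^ 2 ≤ (t - s) ^ 2 * ((e - r) * (e - s)) :=
    mul_le_mul (by nlinarith) (by nlinarith) (by positivity) (by positivity)
  nlinarith

end Weights

lemma sum_Ioc_eq_mul_of_forall_eq {f : ℕ → ℝ} {a b : ℕ} {c : ℝ} (hab : a ≤ b)
    (hf : ∀ i, a < i → i ≤ b → f i = c) : ∑ i ∈ Ioc a b, f i = ((b : ℝ) - a) * c := by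
  rw [sum_congr rfl fun i hi => hf i (mem_Ioc.mp hi).1 (mem_Ioc.mp hi).2, sum_const,
    Nat.card_Ioc, nsmul_eq_mul, Nat.cast_sub hab]

lemma cusum1d_sub (f g : ℕ → ℝ) (s e t : ℕ) :
    cusum1d (f - g) s e t = cusum1d f s e t - cusum1d g s e t := by
  simp only [cusum1d, Pi.sub_apply, sum_sub_distrib]
  ring

section ConstantStretch

variable {g : ℕ → ℝ} {s e r t : ℕ} {b : ℝ}

lemma cusum1d_of_forall_eq (hg : ∀ i, s < i → i ≤ t → g i = b) (hsr : s < r) (hrt : r ≤ t)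
    (hte : t ≤ e) :
    cusum1d g s e r =
      √(((r : ℝ) - s) / ((e - s) * (e - r))) * ((e - t) * b - ∑ i ∈ Ioc t e, g i) := by
  have hleft : ∑ i ∈ Ioc s r, g i = ((r : ℝ) - s) * b :=
    sum_Ioc_eq_mul_of_forall_eq hsr.le fun i hi hir => hg i hi (hir.trans hrt)
  have hright : ∑ i ∈ Ioc r e, g i = ((t : ℝ) - r) * b + ∑ i ∈ Ioc t e, g i := by
    rw [← sum_Ioc_consecutive g hrt hte,
      sum_Ioc_eq_mul_of_forall_eq hrt fun i hri hit => hg i (hsr.trans hri) hit]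
  have hweights : √(((e : ℝ) - r) / ((e - s) * (r - s))) * (r - s) =
      √(((r : ℝ) - s) / ((e - s) * (e - r))) * (e - r) := by
    have hre : (r : ℝ) ≤ e := by exact_mod_cast hrt.trans hte
    have hsr' : (s : ℝ) < r := by exact_mod_cast hsr
    rw [sqrt_div_mul_mul_self _ _ (by linarith), sqrt_div_mul_mul_self _ _ (by linarith), mul_comm]
  rw [cusum1d, hleft, hright]
  linear_combination b * hweights

lemma cusum1d_eq_cusumScale_mul_of_forall_eq (hg : ∀ i, s < i → i ≤ t → g i = b)
    (hsr : s < r) (hrt : r ≤ t) (hte : t ≤ e) :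
    cusum1d g s e r = cusumScale s e r t * cusum1d g s e t := by
  rw [cusum1d_of_forall_eq hg hsr hrt hte, cusum1d_of_forall_eq hg (hsr.trans_le hrt) le_rfl hte,
    cusumScale]
  rcases hte.eq_or_lt with rfl | hte
  · -- `(t, e]` is empty and `e - t = 0`: both sides vanish
    simp
  have hsr' : (s : ℝ) < r := by exact_mod_cast hsr
  have hrt' : (r : ℝ) ≤ t := by exact_mod_cast hrt
  have hte' : (t : ℝ) < e := by exact_mod_cast hte
  have het : (e : ℝ) - t ≠ 0 := by linarith
  have hts : (t : ℝ) - s ≠ 0 := by linarith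
  rw [← mul_assoc, ← sqrt_mul (div_nonneg (by nlinarith) (by nlinarith))]
  congr 2
  field_simp

end ConstantStretch

lemma abs_cusum1d_le_of_sub_eq {f h : ℕ → ℝ} {s e r t : ℕ} {b : ℝ}
    (hg : ∀ i, s < i → i ≤ t → (f - h) i = b) (hsr : s < r) (hrt : r ≤ t) (hte : t ≤ e) :
    |cusum1d f s e r| ≤ cusumScale s e r t * |cusum1d f s e t| +
      (|cusum1d h s e r| + cusumScale s e r t * |cusum1d h s e t|) := by
  have hscale := cusum1d_eq_cusumScale_mul_of_forall_eq hg hsr hrt hte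
  rw [cusum1d_sub, cusum1d_sub] at hscale
  have hsplit : cusum1d f s e r = cusumScale s e r t * cusum1d f s e t +
      (cusum1d h s e r - cusumScale s e r t * cusum1d h s e t) := by
    linear_combination hscale
  have hρ0 : 0 ≤ cusumScale s e r t := sqrt_nonneg _
  calc |cusum1d f s e r|
      ≤ |cusumScale s e r t * cusum1d f s e t| +
          (|cusum1d h s e r| + |cusumScale s e r t * cusum1d h s e t|) :=
        hsplit ▸ (abs_add_le _ _).trans (add_le_add_right (abs_sub _ _) _)
    _ = _ := by rw [abs_mul, abs_mul, abs_of_nonneg hρ0]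

section Step

variable (κ : ℝ) {s e r t : ℕ}

lemma cusum1d_step (hsr : s ≤ r) (hrt : r ≤ t) (hte : t ≤ e) :
    cusum1d (fun i => if i ≤ r then κ else 0) s e t =
      κ * (((r : ℝ) - s) * √((e - t) / ((e - s) * (t - s)))) := by
  have hleft : ∑ i ∈ Ioc s t, (if i ≤ r then κ else 0) = ((r : ℝ) - s) * κ := by
    rw [← sum_Ioc_consecutive _ hsr hrt,
      sum_Ioc_eq_mul_of_forall_eq hsr fun i _ hir => if_pos hir,
      sum_Ioc_eq_mul_of_forall_eq hrt fun i hri _ => if_neg hri.not_ge, mul_zero, add_zero]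
  have hright : ∑ i ∈ Ioc t e, (if i ≤ r then κ else 0) = 0 := by
    rw [sum_Ioc_eq_mul_of_forall_eq hte fun i hti _ => if_neg (hrt.trans_lt hti).not_ge, mul_zero]
  rw [cusum1d, hleft, hright]
  ring

lemma abs_cusum1d_step_le (hsr : s < r) (hre : r ≤ e) :
    |cusum1d (fun i => if i ≤ r then κ else 0) s e r| ≤ |κ| * √((r : ℝ) - s) := by
  have hsr' : (s : ℝ) < r := by exact_mod_cast hsr
  rw [cusum1d_step κ hsr.le le_rfl hre, abs_mul,
    abs_of_nonneg (mul_nonneg (by linarith) (sqrt_nonneg _))]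
  exact mul_le_mul_of_nonneg_left (mul_sqrt_div_le_sqrt hsr' le_rfl (by exact_mod_cast hre))
    (abs_nonneg κ)

lemma cusumScale_mul_abs_cusum1d_step_le (hsr : s < r) (hrt : r ≤ t) (hte : t ≤ e) :
    cusumScale s e r t * |cusum1d (fun i => if i ≤ r then κ else 0) s e t| ≤
      |κ| * √((r : ℝ) - s) := by
  have hsr' : (s : ℝ) < r := by exact_mod_cast hsr
  rw [cusum1d_step κ hsr.le hrt hte, abs_mul,
    abs_of_nonneg (mul_nonneg (by linarith) (sqrt_nonneg _)), mul_left_comm]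
  exact mul_le_mul_of_nonneg_left
    (cusumScale_mul_le_sqrt hsr' (by exact_mod_cast hrt) (by exact_mod_cast hte)) (abs_nonneg κ)

end Step

theorem cusum_boundary_bound_two_change_points_general
    (f : ℕ → ℝ) (s e ηr ηr1 : ℕ) (c₁ Δ κr : ℝ) (hc₁ : 0 < c₁)
    (hs : s < ηr) (hr : ηr < ηr1) (hre : ηr1 ≤ e)
    -- `ηr` is the first change point in `(s, e)`: `f` is constant on `(s, ηr]`
    (hconst1 : ∀ i, s < i → i ≤ ηr → f i = f ηr)
    -- `f` is constant on `(ηr, ηr1]`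
    (hconst2 : ∀ i, ηr < i → i ≤ ηr1 → f i = f ηr1)
    -- jump size at `ηr`
    (hκr : κr = |f (ηr + 1) - f ηr|)
    -- minimal spacing `Δ` between consecutive change points
    (hspace : Δ ≤ (ηr1 : ℝ) - (ηr : ℝ))
    (hclose : (ηr : ℝ) - (s : ℝ) ≤ c₁ ^ 2 * Δ) :
    |cusum1d f s e ηr| ≤ c₁ * |cusum1d f s e ηr1| + 2 * κr * Real.sqrt ((ηr : ℝ) - s) := by
  set κ := f ηr - f ηr1
  set h : ℕ → ℝ := fun i => if i ≤ ηr then κ else 0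
  have hg : ∀ i, s < i → i ≤ ηr1 → (f - h) i = f ηr1 := by
    intro i hsi hi
    by_cases hir : i ≤ ηr
    · simp [h, hir, hconst1 i hsi hir, κ]
    · simp [h, hir, hconst2 i (not_le.mp hir) hi]
  have hs' : (s : ℝ) < ηr := by exact_mod_cast hs
  have hr' : (ηr : ℝ) ≤ ηr1 := by exact_mod_cast hr.le
  have hρ : cusumScale s e ηr ηr1 ≤ c₁ := cusumScale_le hs' hr' (by exact_mod_cast hre) hc₁.le
    (hclose.trans (mul_le_mul_of_nonneg_left (by linarith) (sq_nonneg c₁)))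
  have hκ : κr = |κ| := by
    rw [hκr, hconst2 (ηr + 1) ηr.lt_succ_self hr, abs_sub_comm]
  calc |cusum1d f s e ηr|
      ≤ cusumScale s e ηr ηr1 * |cusum1d f s e ηr1| +
          (|cusum1d h s e ηr| + cusumScale s e ηr ηr1 * |cusum1d h s e ηr1|) :=
        abs_cusum1d_le_of_sub_eq hg hs hr.le hre
    _ ≤ c₁ * |cusum1d f s e ηr1| + (|κ| * √((ηr : ℝ) - s) + |κ| * √((ηr : ℝ) - s)) := by
        grw [abs_cusum1d_step_le κ hs (hr.le.trans hre),
          cusumScale_mul_abs_cusum1d_step_le κ hs hr.le hre, hρ]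
    _ = c₁ * |cusum1d f s e ηr1| + 2 * κr * √((ηr : ℝ) - s) := by
        rw [hκ]
        ring

theorem cusum_boundary_bound_two_change_points
    (f : ℕ → ℝ) (s e ηr ηr1 : ℕ) (c₁ Δ κr : ℝ) (hc₁ : 0 < c₁) (hΔ : 0 < Δ)
    (hs : s < ηr) (hr : ηr < ηr1) (hre : ηr1 ≤ e)
    -- `ηr` is the first change point in `(s, e)`: `f` is constant on `(s, ηr]`
    (hconst1 : ∀ i, s < i → i ≤ ηr → f i = f ηr)
    -- `f` is constant on `(ηr, ηr1]`
    (hconst2 : ∀ i, ηr < i → i ≤ ηr1 → f i = f ηr1)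
    -- jump size at `ηr`
    (hκr : κr = |f (ηr + 1) - f ηr|)
    -- minimal spacing `Δ` between consecutive change points
    (hspace : Δ ≤ (ηr1 : ℝ) - (ηr : ℝ))
    (hclose : (ηr : ℝ) - (s : ℝ) ≤ c₁ ^ 2 * Δ) :
    |cusum1d f s e ηr| ≤ c₁ * |cusum1d f s e ηr1| + 2 * κr * Real.sqrt ((ηr : ℝ) - s) :=
  cusum_boundary_bound_two_change_points_general f s e ηr ηr1 c₁ Δ κr hc₁ hs hr hre hconst1 hconst2
    hκr hspace hclose
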